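/- Let {X_i : i ≥ 1} be nonnegative-integer-valued random variables with strong uniform exponential tail decay: there exist C_0, C_1 > 0 such that P(X_i > n | X_1, …, X_{i−1}) ≤ C_0 exp(−C_1 n) almost surely for all i ≥ 1 and all n ∈ ℕ. Let Y be a positive-integer-valued random variable on the same probability space (not assumed independent of the X_i) with P(Y > n) ≤ C_0 exp(−C_1 n) for all n. Then there exist constants C_0', C_1' > 0 such that P(∑_{i=1}^{Y} X_i > n) ≤ C_0' exp(−C_1' n) for all n ∈ ℕ. -/

import Mathlib

open MeasureTheory ProbabilityTheory
open scoped ENNReal ENat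

noncomputable section

/-- The parabolic region `∇(v)`: the set of `w` lying (weakly) above `v` with
`|w.1 - v.1| ≤ (w.2 - v.2)^2`. -/
def nablaRel (v w : ℤ × ℤ) : Prop :=
  v.2 ≤ w.2 ∧ w.1 - v.1 ≤ (w.2 - v.2) ^ 2 ∧ -((w.2 - v.2) ^ 2) ≤ w.1 - v.1

/-- The data of the perturbed Howard model: an i.i.d. family
`Γ_u = (B_u, R_u, (X_u, Y_u))`, `u ∈ ℤ²`, where `B_u` is Bernoulli(p), `R_u` is a Rademacher
variable, and `(X_u, Y_u)` is the perturbation vector with the prescribed marginals,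
the three families being mutually independent. -/
structure PHModel (Ω : Type) [MeasurableSpace Ω] where
  μ : Measure Ω
  prob : IsProbabilityMeasure μ
  p : ℝ
  θx : ℝ
  θy : ℝ
  hp : 0 < p ∧ p < 1
  hθx : 0 < θx ∧ θx < 1
  hθy : 0 < θy ∧ θy < 1
  B : ℤ × ℤ → Ω → Bool
  Rad : ℤ × ℤ → Ω → ℤ
  X : ℤ × ℤ → Ω → ℤ
  Y : ℤ × ℤ → Ω → ℤ
  measΓ : ∀ u, Measurable fun ω => (B u ω, Rad u ω, X u ω, Y u ω)
  iidΓ : iIndepFun (fun u ω => (B u ω, Rad u ω, X u ω, Y u ω)) μ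
  identΓ : ∀ u, Measure.map (fun ω => (B u ω, Rad u ω, X u ω, Y u ω)) μ
      = Measure.map (fun ω => (B 0 ω, Rad 0 ω, X 0 ω, Y 0 ω)) μ
  indepBRL : iIndep
      ![⨆ u : ℤ × ℤ, MeasurableSpace.comap (B u) inferInstance,
        ⨆ u : ℤ × ℤ, MeasurableSpace.comap (Rad u) inferInstance,
        ⨆ u : ℤ × ℤ, MeasurableSpace.comap (fun ω => (X u ω, Y u ω)) inferInstance] μ
  lawB : ∀ u, μ {ω | B u ω = true} = ENNReal.ofReal p
  lawRad : ∀ u, μ {ω | Rad u ω = 1} = 1 / 2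
  RadSigns : ∀ u ω, Rad u ω = 1 ∨ Rad u ω = -1
  lawX : ∀ u (j : ℤ), μ {ω | X u ω = j} = ENNReal.ofReal (θx * ((1 - θx) / 2) ^ j.natAbs)
  Ynn : ∀ u ω, 0 ≤ Y u ω
  lawY : ∀ u (j : ℕ), μ {ω | Y u ω = (j : ℤ)} = ENNReal.ofReal (θy * (1 - θy) ^ j)
  hXY0 : ∀ u, 0 < μ {ω | X u ω = 0 ∧ Y u ω = 0}

namespace PHModel

variable {Ω : Type} [MeasurableSpace Ω]

/-- The full random vector `Γ_u`. -/
def Γfun (M : PHModel Ω) (u : ℤ × ℤ) (ω : Ω) : Bool × ℤ × ℤ × ℤ :=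
  (M.B u ω, M.Rad u ω, M.X u ω, M.Y u ω)

/-- The perturbed position `ũ = u + Λ_u` of the lattice point `u`. -/
def pert (M : PHModel Ω) (u : ℤ × ℤ) (ω : Ω) : ℤ × ℤ :=
  (u.1 + M.X u ω, u.2 + M.Y u ω)

/-- The set `V` of perturbed open vertices. -/
def V (M : PHModel Ω) (ω : Ω) : Set (ℤ × ℤ) :=
  {v | ∃ u : ℤ × ℤ, M.B u ω = true ∧ v = M.pert u ω}

/-- `J(u)`: distance to the nearest point of `V` on the line `y = u.2 + 1`. -/
def J (M : PHModel Ω) (u : ℤ × ℤ) (ω : Ω) : ℕ :=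
  sInf {k : ℕ | (u.1 + (k : ℤ), u.2 + 1) ∈ M.V ω ∨ (u.1 - (k : ℤ), u.2 + 1) ∈ M.V ω}

open Classical in
/-- The perturbed Howard step `h(u)`. -/
def step (M : PHModel Ω) (u : ℤ × ℤ) (ω : Ω) : ℤ × ℤ :=
  if (u.1 + (M.J u ω : ℤ), u.2 + 1) ∈ M.V ω ∧ (u.1 - (M.J u ω : ℤ), u.2 + 1) ∉ M.V ω then
    (u.1 + (M.J u ω : ℤ), u.2 + 1)
  else if (u.1 - (M.J u ω : ℤ), u.2 + 1) ∈ M.V ω ∧ (u.1 + (M.J u ω : ℤ), u.2 + 1) ∉ M.V ω then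
    (u.1 - (M.J u ω : ℤ), u.2 + 1)
  else (u.1 + M.Rad u ω * (M.J u ω : ℤ), u.2 + 1)

/-- Iterated steps `h^n(u)`. -/
def iter (M : PHModel Ω) : ℕ → ℤ × ℤ → Ω → ℤ × ℤ
  | 0, u, _ => u
  | n + 1, u, ω => M.step (M.iter n u ω) ω

/-- The σ-field `F_n = σ(Γ_w : w.2 ≤ n)`. -/
def Fσ (M : PHModel Ω) (n : ℤ) : MeasurableSpace Ω :=
  ⨆ w : {w : ℤ × ℤ // w.2 ≤ n}, MeasurableSpace.comap (M.Γfun w.1) inferInstance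

/-- The event `In(v)`: the path started at `v` stays in `∇(v)` for ever. -/
def InEvt (M : PHModel Ω) (v : ℤ × ℤ) : Set Ω :=
  {ω | ∀ n : ℕ, 1 ≤ n → nablaRel v (M.iter n v ω)}

/-- The event that `In(h^n(x_i))` occurs for every `i`. -/
def InAll (M : PHModel Ω) (k : ℕ) (x : Fin k → ℤ × ℤ) (n : ℕ) : Set Ω :=
  {ω | ∀ i : Fin k, ω ∈ M.InEvt (M.iter n (x i) ω)}

/-- The `In` steps `τ_j` of the joint exploration process (with value `⊤` if there is
no further `In` step). -/
def tau (M : PHModel Ω) (k : ℕ) (x : Fin k → ℤ × ℤ) : ℕ → Ω → ℕ∞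
  | 0, _ => 0
  | j + 1, ω =>
    sInf {m : ℕ∞ | ∃ n : ℕ, m = (n : ℕ∞) ∧ M.tau k x j ω < (n : ℕ∞) ∧ ω ∈ M.InAll k x n}

/-- The enlarged σ-field `F̄_n`. -/
def Fbar (M : PHModel Ω) (k : ℕ) (x : Fin k → ℤ × ℤ) (n : ℕ) : MeasurableSpace Ω :=
  M.Fσ n ⊔ MeasurableSpace.generateFrom
    {s | ∃ i : Fin k, ∃ m : ℕ, m ≤ n ∧ s = {ω | ω ∈ M.InEvt (M.iter m (x i) ω)}}

/-- The stopped σ-field `G_j = F̄_{τ_j}`. -/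
def Gσ (M : PHModel Ω) (k : ℕ) (x : Fin k → ℤ × ℤ) (j : ℕ) : MeasurableSpace Ω :=
  MeasurableSpace.generateFrom
    {s | MeasurableSet s ∧
      ∀ n : ℕ, MeasurableSet[M.Fbar k x n] (s ∩ {ω | M.tau k x j ω ≤ (n : ℕ∞)})}

/-- The information set `I_l`: perturbed open points coming from the closed lower
half-plane `{w : w.2 ≤ l}` that land strictly above level `l`. -/
def Iinfo (M : PHModel Ω) (l : ℤ) (ω : Ω) : Set (ℤ × ℤ) :=
  {v | (∃ u : ℤ × ℤ, u.2 ≤ l ∧ M.B u ω = true ∧ v = M.pert u ω) ∧ l < v.2}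

open Classical in
/-- Indicator-function version of the information set `I_l`. -/
def IinfoInd (M : PHModel Ω) (l : ℤ) (ω : Ω) : ℤ × ℤ → Bool :=
  fun w => if w ∈ M.Iinfo l ω then true else false

/-- The set `H_{τ_j} = I_{τ_j} ∩ (∪_i ∇(h^{τ_j}(x_i)))`. -/
def Hset (M : PHModel Ω) (k : ℕ) (x : Fin k → ℤ × ℤ) (j : ℕ) (ω : Ω) : Set (ℤ × ℤ) :=
  {v | ∃ n : ℕ, M.tau k x j ω = (n : ℕ∞) ∧ v ∈ M.Iinfo (n : ℤ) ω ∧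
    ∃ i : Fin k, nablaRel (M.iter n (x i) ω) v}

/-- The renewal indices `γ_ℓ`. -/
def gam (M : PHModel Ω) (k : ℕ) (x : Fin k → ℤ × ℤ) : ℕ → Ω → ℕ∞
  | 0, _ => 0
  | ℓ + 1, ω =>
    sInf {m : ℕ∞ | ∃ j : ℕ, m = (j : ℕ∞) ∧ M.gam k x ℓ ω < (j : ℕ∞) ∧
      M.tau k x j ω ≠ ⊤ ∧ M.Hset k x j ω = ∅}

/-- The renewal steps `σ_ℓ = τ_{γ_ℓ}`. -/
def sig (M : PHModel Ω) (k : ℕ) (x : Fin k → ℤ × ℤ) (ℓ : ℕ) (ω : Ω) : ℕ∞ :=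
  if M.gam k x ℓ ω = ⊤ then ⊤ else M.tau k x (M.gam k x ℓ ω).toNat ω

/-- The stopped σ-field `S_ℓ = G_{γ_ℓ}`. -/
def Sσ (M : PHModel Ω) (k : ℕ) (x : Fin k → ℤ × ℤ) (ℓ : ℕ) : MeasurableSpace Ω :=
  MeasurableSpace.generateFrom
    {s | MeasurableSet s ∧
      ∀ j : ℕ, MeasurableSet[M.Gσ k x j] (s ∩ {ω | M.gam k x ℓ ω ≤ (j : ℕ∞)})}

/-- The height process `L_j = (sup {w.2 - τ_j : w ∈ H_{τ_j}}) ∨ 0`. -/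
def Lht (M : PHModel Ω) (k : ℕ) (x : Fin k → ℤ × ℤ) (j : ℕ) (ω : Ω) : ℕ∞ :=
  ⨆ v ∈ M.Hset k x j ω, (((v.2 - ((M.tau k x j ω).toNat : ℤ)).toNat : ℕ∞))

/-- The contribution `N_j` (for `j ≥ 1`) of newly explored vertices, i.e. of open `w` with
`τ_{j-1} < w.2 ≤ τ_j` whose perturbation lands in `∪_i ∇(h^{τ_j}(x_i))`. -/
def NN (M : PHModel Ω) (k : ℕ) (x : Fin k → ℤ × ℤ) (j : ℕ) (ω : Ω) : ℕ∞ :=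
  1 + ⨆ w ∈ {w : ℤ × ℤ | 0 < w.2 ∧ M.tau k x (j - 1) ω < ((w.2.toNat : ℕ∞)) ∧
        ((w.2.toNat : ℕ∞)) ≤ M.tau k x j ω ∧ M.B w ω = true ∧
        ∃ i : Fin k, nablaRel (M.iter (M.tau k x j ω).toNat (x i) ω) (M.pert w ω)},
      (((M.pert w ω).2 - ((M.tau k x j ω).toNat : ℤ)).toNat : ℕ∞)

/-- The set of special (unperturbed open) vertices. -/
def Vsp (M : PHModel Ω) (ω : Ω) : Set (ℤ × ℤ) :=
  {u | M.B u ω = true ∧ M.X u ω = 0 ∧ M.Y u ω = 0}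

/-- `J_sp(u)`: distance to the nearest special point on the line `y = u.2 + 1`. -/
def Jsp (M : PHModel Ω) (u : ℤ × ℤ) (ω : Ω) : ℕ :=
  sInf {k : ℕ | (u.1 + (k : ℤ), u.2 + 1) ∈ M.Vsp ω ∨ (u.1 - (k : ℤ), u.2 + 1) ∈ M.Vsp ω}

/-- Position of the single path started at `x₁` at its `ℓ`-th renewal step,
`Y_ℓ = h^{σ_ℓ}(x₁)`. -/
def renewPos (M : PHModel Ω) (x₁ : ℤ × ℤ) (ℓ : ℕ) (ω : Ω) : ℤ × ℤ :=
  M.iter (M.sig 1 (fun _ => x₁) ℓ ω).toNat x₁ ω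

/-- The renewal increments `Y_{ℓ+1} - Y_ℓ`. -/
def renewIncr (M : PHModel Ω) (x₁ : ℤ × ℤ) (ℓ : ℕ) (ω : Ω) : ℤ × ℤ :=
  M.renewPos x₁ (ℓ + 1) ω - M.renewPos x₁ ℓ ω

/-- The difference process `Z_ℓ` of two paths observed at joint renewal steps. -/
def Zdiff (M : PHModel Ω) (x : Fin 2 → ℤ × ℤ) (ℓ : ℕ) (ω : Ω) : ℤ :=
  (M.iter (M.sig 2 x ℓ ω).toNat (x 1) ω).1 - (M.iter (M.sig 2 x ℓ ω).toNat (x 0) ω).1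

/-- The linearly interpolated perturbed Howard path started at `x`,
as a real-valued function of time `t ≥ x.2`. -/
def path (M : PHModel Ω) (x : ℤ × ℤ) (ω : Ω) (t : ℝ) : ℝ :=
  (1 - (t - ((x.2 : ℝ) + ((⌊t⌋ - x.2).toNat : ℝ)))) *
      ((M.iter (⌊t⌋ - x.2).toNat x ω).1 : ℝ) +
    (t - ((x.2 : ℝ) + ((⌊t⌋ - x.2).toNat : ℝ))) *
      ((M.iter ((⌊t⌋ - x.2).toNat + 1) x ω).1 : ℝ)

/-- The coalescence time `T(x₁, x₂)` of the two paths started at `x₁` and `x₂`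
(`⊤` if they never meet). -/
def coalT (M : PHModel Ω) (x₁ x₂ : ℤ × ℤ) (ω : Ω) : ℝ≥0∞ :=
  sInf {t : ℝ≥0∞ | ∃ r : ℝ, 0 ≤ r ∧ t = ENNReal.ofReal r ∧ M.path x₁ ω r = M.path x₂ ω r}

/-- The (undirected) perturbed Howard graph `G = (V, E)`: `a` and `b` are adjacent iff one of
them belongs to `V` and maps to the other under the step `h`. -/
def graphG (M : PHModel Ω) (ω : Ω) : SimpleGraph (ℤ × ℤ) where
  Adj a b := a ≠ b ∧ ((a ∈ M.V ω ∧ M.step a ω = b) ∨ (b ∈ M.V ω ∧ M.step b ω = a))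
  symm := by
    constructor
    intro a b h
    exact ⟨h.1.symm, h.2.symm⟩
  loopless := by
    constructor
    intro a h
    exact h.1 rfl

end PHModel

/-!
Write `S m = X 0 + ⋯ + X (m - 1)`. On each atom of `σ(X 0, …, X (m - 1))` the tail hypothesis
bounds the exponential moment `E e^{C₁ X m / 2}` by a constant `K`, so `E e^{C₁ S m / 2} ≤ K ^ m`
and Markov's inequality gives `P(S m > n) ≤ e^{-C₁ n / 2} K ^ m`. Splitting according to whether
`Y > m`, with `m` a small multiple of `n`, both `P(Y > m)` and `P(S m > n)` decay exponentially
in `n`.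
-/

open Real

section ExponentialTail

variable {Ω : Type*} [MeasurableSpace Ω]

/-- Strong uniform exponential tail decay, the conditioning on `σ(X 0, …, X (i - 1))` being
expressed atom by atom. -/
def HasUniformCondExpTail (μ : Measure Ω) (X : ℕ → Ω → ℕ) (C₀ C₁ : ℝ) : Prop :=
  ∀ (i : ℕ) (v : ℕ → ℕ) (n : ℕ), 0 < μ {ω | ∀ j < i, X j ω = v j} →
    (μ[|{ω | ∀ j < i, X j ω = v j}]) {ω | n < X i ω} ≤ ENNReal.ofReal (C₀ * exp (-C₁ * n))

/-- `1 + C₀ e^{C₁/2} ∑ₙ e^{-C₁ n/2}`, which bounds `E e^{C₁ Z / 2}` whenever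
`P(Z > t) ≤ C₀ e^{-C₁ t}` for all `t`. -/
def tailMgfBound (C₀ C₁ : ℝ) : ℝ :=
  1 + C₀ * exp (C₁ / 2) * (1 - exp (-(C₁ / 2)))⁻¹

lemma one_lt_tailMgfBound {C₀ C₁ : ℝ} (hC₀ : 0 < C₀) (hC₁ : 0 < C₁) :
    1 < tailMgfBound C₀ C₁ := by
  have : exp (-(C₁ / 2)) < 1 := exp_lt_one_iff.2 (by linarith)
  have : 0 < C₀ * exp (C₁ / 2) * (1 - exp (-(C₁ / 2)))⁻¹ :=
    mul_pos (by positivity) (inv_pos.2 (by linarith))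
  unfold tailMgfBound
  linarith

lemma tsum_exp_mul_le_of_tail {C₀ C₁ : ℝ} (hC₀ : 0 ≤ C₀) (hC₁ : 0 < C₁) {p : ℕ → ℝ≥0∞}
    {M : ℝ≥0∞} (h_zero : p 0 ≤ M)
    (h_succ : ∀ n : ℕ, p (n + 1) ≤ ENNReal.ofReal (C₀ * exp (-C₁ * n)) * M) :
    ∑' n : ℕ, ENNReal.ofReal (exp (C₁ / 2 * n)) * p n
      ≤ ENNReal.ofReal (tailMgfBound C₀ C₁) * M := by
  set r := exp (-(C₁ / 2))
  have hr₀ : 0 ≤ r := (exp_pos _).le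
  have hr₁ : r < 1 := exp_lt_one_iff.2 (by linarith)
  have h_term (n : ℕ) : ENNReal.ofReal (exp (C₁ / 2 * ↑(n + 1))) * p (n + 1)
      ≤ ENNReal.ofReal (C₀ * exp (C₁ / 2) * r ^ n) * M := by
    have h_eq :
        exp (C₁ / 2 * ↑(n + 1)) * (C₀ * exp (-C₁ * n)) = C₀ * exp (C₁ / 2) * r ^ n := by
      rw [← exp_nat_mul, mul_left_comm, ← exp_add, mul_assoc, ← exp_add]
      push_cast
      ring_nf
    calc ENNReal.ofReal (exp (C₁ / 2 * ↑(n + 1))) * p (n + 1)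
        ≤ ENNReal.ofReal (exp (C₁ / 2 * ↑(n + 1)))
            * (ENNReal.ofReal (C₀ * exp (-C₁ * n)) * M) :=
          mul_le_mul_right (h_succ n) _
      _ = ENNReal.ofReal (C₀ * exp (C₁ / 2) * r ^ n) * M := by
          rw [← mul_assoc, ← ENNReal.ofReal_mul (exp_pos _).le, h_eq]
  rw [tsum_eq_zero_add' ENNReal.summable]
  calc ENNReal.ofReal (exp (C₁ / 2 * ↑(0 : ℕ))) * p 0
        + ∑' n : ℕ, ENNReal.ofReal (exp (C₁ / 2 * ↑(n + 1))) * p (n + 1)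
      ≤ M + ∑' n : ℕ, ENNReal.ofReal (C₀ * exp (C₁ / 2) * r ^ n) * M :=
        add_le_add (by simpa using h_zero) (ENNReal.tsum_le_tsum h_term)
    _ = M + ENNReal.ofReal (C₀ * exp (C₁ / 2) * (1 - r)⁻¹) * M := by
        rw [ENNReal.tsum_mul_right, ← ENNReal.ofReal_tsum_of_nonneg (fun n => by positivity)
          ((summable_geometric_of_lt_one hr₀ hr₁).mul_left _), tsum_mul_left,
          tsum_geometric_of_lt_one hr₀ hr₁]
    _ = ENNReal.ofReal (tailMgfBound C₀ C₁) * M := by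
        rw [tailMgfBound, ENNReal.ofReal_add zero_le_one (by positivity), ENNReal.ofReal_one,
          add_mul, one_mul]

lemma lintegral_comp_eq_tsum {β : Type*} [MeasurableSpace β] [Countable β]
    [MeasurableSingletonClass β] {μ : Measure Ω} {P : Ω → β} (hP : Measurable P)
    (g : β → ℝ≥0∞) : ∫⁻ ω, g (P ω) ∂μ = ∑' b, g b * μ (P ⁻¹' {b}) := by
  rw [← lintegral_map' (measurable_of_countable g).aemeasurable hP.aemeasurable,
    lintegral_countable']
  simp only [Measure.map_apply hP (measurableSet_singleton _)]

lemma lintegral_eq_tsum_setLIntegral_fiber {β : Type*} [MeasurableSpace β] [Countable β]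
    [MeasurableSingletonClass β] {μ : Measure Ω} {P : Ω → β} (hP : Measurable P)
    (f : Ω → ℝ≥0∞) : ∫⁻ ω, f ω ∂μ = ∑' b, ∫⁻ ω in P ⁻¹' {b}, f ω ∂μ := by
  rw [← lintegral_iUnion (fun b => hP (measurableSet_singleton b)) (pairwise_disjoint_fiber P) f,
    ← Set.preimage_iUnion, Set.iUnion_of_singleton, Set.preimage_univ, Measure.restrict_univ]

lemma lintegral_exp_le_of_tail {C₀ C₁ : ℝ} (hC₀ : 0 ≤ C₀) (hC₁ : 0 < C₁) {ν : Measure Ω}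
    {Z : Ω → ℕ} (hZ : Measurable Z)
    (h_tail : ∀ t : ℕ, ν {ω | t < Z ω} ≤ ENNReal.ofReal (C₀ * exp (-C₁ * t)) * ν Set.univ) :
    ∫⁻ ω, ENNReal.ofReal (exp (C₁ / 2 * Z ω)) ∂ν
      ≤ ENNReal.ofReal (tailMgfBound C₀ C₁) * ν Set.univ := by
  rw [lintegral_comp_eq_tsum hZ (fun n => ENNReal.ofReal (exp (C₁ / 2 * n)))]
  refine tsum_exp_mul_le_of_tail hC₀ hC₁ (measure_mono (Set.subset_univ _)) fun n => ?_
  exact (measure_mono fun ω (hω : Z ω = n + 1) => show n < Z ω by omega).trans (h_tail n)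

end ExponentialTail

section PartialSums

variable {Ω : Type*} [MeasurableSpace Ω] {μ : Measure Ω} {X : ℕ → Ω → ℕ} {C₀ C₁ : ℝ}

/-- Indexed by `Fin m`, so that its fibres form a countable partition of `Ω`. -/
def prefixVals (X : ℕ → Ω → ℕ) (m : ℕ) (ω : Ω) : Fin m → ℕ :=
  fun j => X j ω

lemma measurable_prefixVals (hX : ∀ i, Measurable (X i)) (m : ℕ) :
    Measurable (prefixVals X m) :=
  measurable_pi_lambda _ fun j => hX j

lemma HasUniformCondExpTail.measure_inter_prefixVals_le [IsFiniteMeasure μ]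
    (h : HasUniformCondExpTail μ X C₀ C₁) (hX : ∀ i, Measurable (X i)) (m : ℕ)
    (v : Fin m → ℕ) (t : ℕ) :
    μ ({ω | t < X m ω} ∩ prefixVals X m ⁻¹' {v})
      ≤ ENNReal.ofReal (C₀ * exp (-C₁ * t)) * μ (prefixVals X m ⁻¹' {v}) := by
  have h_eq : prefixVals X m ⁻¹' {v}
      = {ω | ∀ j < m, X j ω = if hj : j < m then v ⟨j, hj⟩ else 0} := by
    ext ω
    simp +contextual [prefixVals, funext_iff, Fin.forall_iff]
  rcases eq_or_ne (μ (prefixVals X m ⁻¹' {v})) 0 with h_null | h_ne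
  · rw [measure_inter_null_of_null_right _ h_null]
    exact bot_le
  · rw [Set.inter_comm,
      ← cond_mul_eq_inter (measurable_prefixVals hX m (measurableSet_singleton v))]
    gcongr
    rw [h_eq] at h_ne ⊢
    exact h m _ t (pos_iff_ne_zero.2 h_ne)

lemma lintegral_exp_sum_range_succ_le [IsFiniteMeasure μ] (h : HasUniformCondExpTail μ X C₀ C₁)
    (hX : ∀ i, Measurable (X i)) (hC₀ : 0 ≤ C₀) (hC₁ : 0 < C₁) (m : ℕ) :
    ∫⁻ ω, ENNReal.ofReal (exp (C₁ / 2 * ((∑ i ∈ Finset.range (m + 1), X i ω : ℕ) : ℝ))) ∂μ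
      ≤ ENNReal.ofReal (tailMgfBound C₀ C₁)
          * ∫⁻ ω, ENNReal.ofReal (exp (C₁ / 2 * ((∑ i ∈ Finset.range m, X i ω : ℕ) : ℝ))) ∂μ := by
  set P := prefixVals X m
  have hP : Measurable P := measurable_prefixVals hX m
  have h_sum (ω : Ω) : ∑ i ∈ Finset.range m, X i ω = ∑ j, P ω j :=
    (Fin.sum_univ_eq_sum_range (X · ω) m).symm
  have h_fiber (v : Fin m → ℕ) :
      ∫⁻ ω in P ⁻¹' {v},
          ENNReal.ofReal (exp (C₁ / 2 * ((∑ i ∈ Finset.range (m + 1), X i ω : ℕ) : ℝ))) ∂μ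
        = ENNReal.ofReal (exp (C₁ / 2 * ((∑ j, v j : ℕ) : ℝ)))
            * ∫⁻ ω in P ⁻¹' {v}, ENNReal.ofReal (exp (C₁ / 2 * X m ω)) ∂μ := by
    rw [← lintegral_const_mul _ (by fun_prop)]
    refine setLIntegral_congr_fun (hP (measurableSet_singleton v)) fun ω (hω : P ω = v) => ?_
    rw [Finset.sum_range_succ, h_sum, hω, Nat.cast_add, mul_add, exp_add,
      ENNReal.ofReal_mul (exp_pos _).le]
  have h_atom (v : Fin m → ℕ) :
      ∫⁻ ω in P ⁻¹' {v}, ENNReal.ofReal (exp (C₁ / 2 * X m ω)) ∂μ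
        ≤ ENNReal.ofReal (tailMgfBound C₀ C₁) * μ (P ⁻¹' {v}) := by
    rw [← Measure.restrict_apply_univ]
    refine lintegral_exp_le_of_tail hC₀ hC₁ (hX m) fun t => ?_
    rw [Measure.restrict_apply (measurableSet_lt measurable_const (hX m)),
      Measure.restrict_apply_univ]
    exact h.measure_inter_prefixVals_le hX m v t
  calc ∫⁻ ω, ENNReal.ofReal (exp (C₁ / 2 * ((∑ i ∈ Finset.range (m + 1), X i ω : ℕ) : ℝ))) ∂μ
      = ∑' v, ENNReal.ofReal (exp (C₁ / 2 * ((∑ j, v j : ℕ) : ℝ)))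
          * ∫⁻ ω in P ⁻¹' {v}, ENNReal.ofReal (exp (C₁ / 2 * X m ω)) ∂μ := by
        rw [lintegral_eq_tsum_setLIntegral_fiber hP]
        exact tsum_congr h_fiber
    _ ≤ ∑' v, ENNReal.ofReal (exp (C₁ / 2 * ((∑ j, v j : ℕ) : ℝ)))
          * (ENNReal.ofReal (tailMgfBound C₀ C₁) * μ (P ⁻¹' {v})) :=
        ENNReal.tsum_le_tsum fun v => mul_le_mul_right (h_atom v) _
    _ = ENNReal.ofReal (tailMgfBound C₀ C₁)
          * ∫⁻ ω, ENNReal.ofReal (exp (C₁ / 2 * ((∑ i ∈ Finset.range m, X i ω : ℕ) : ℝ))) ∂μ := by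
        simp_rw [h_sum]
        rw [lintegral_comp_eq_tsum hP
          (fun v => ENNReal.ofReal (exp (C₁ / 2 * ((∑ j, v j : ℕ) : ℝ)))), ← ENNReal.tsum_mul_left]
        exact tsum_congr fun v => mul_left_comm _ _ _

lemma lintegral_exp_sum_range_le [IsProbabilityMeasure μ] (h : HasUniformCondExpTail μ X C₀ C₁)
    (hX : ∀ i, Measurable (X i)) (hC₀ : 0 ≤ C₀) (hC₁ : 0 < C₁) (m : ℕ) :
    ∫⁻ ω, ENNReal.ofReal (exp (C₁ / 2 * ((∑ i ∈ Finset.range m, X i ω : ℕ) : ℝ))) ∂μ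
      ≤ ENNReal.ofReal (tailMgfBound C₀ C₁) ^ m := by
  induction m with
  | zero => simp
  | succ m ih =>
    calc _ ≤ ENNReal.ofReal (tailMgfBound C₀ C₁)
          * ∫⁻ ω, ENNReal.ofReal (exp (C₁ / 2 * ((∑ i ∈ Finset.range m, X i ω : ℕ) : ℝ))) ∂μ :=
          lintegral_exp_sum_range_succ_le h hX hC₀ hC₁ m
      _ ≤ ENNReal.ofReal (tailMgfBound C₀ C₁) ^ (m + 1) := by
          rw [pow_succ']
          exact mul_le_mul_right ih _

lemma measure_lt_sum_range_le [IsProbabilityMeasure μ] (h : HasUniformCondExpTail μ X C₀ C₁)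
    (hX : ∀ i, Measurable (X i)) (hC₀ : 0 ≤ C₀) (hC₁ : 0 < C₁) (m n : ℕ) :
    μ {ω | n < ∑ i ∈ Finset.range m, X i ω}
      ≤ ENNReal.ofReal (exp (-(C₁ / 2) * n)) * ENNReal.ofReal (tailMgfBound C₀ C₁) ^ m := by
  set f := fun ω => ENNReal.ofReal (exp (C₁ / 2 * ((∑ i ∈ Finset.range m, X i ω : ℕ) : ℝ)))
  have hf : Measurable f := by
    have := Finset.measurable_sum (Finset.range m) fun i _ => hX i
    fun_prop
  have h_sub : {ω | n < ∑ i ∈ Finset.range m, X i ω}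
      ⊆ {ω | ENNReal.ofReal (exp (C₁ / 2 * n)) ≤ f ω} := fun ω (hω : n < _) =>
    ENNReal.ofReal_le_ofReal (exp_le_exp.2 (by gcongr))
  calc μ {ω | n < ∑ i ∈ Finset.range m, X i ω}
      = ENNReal.ofReal (exp (-(C₁ / 2) * n))
          * (ENNReal.ofReal (exp (C₁ / 2 * n)) * μ {ω | n < ∑ i ∈ Finset.range m, X i ω}) := by
        rw [← mul_assoc, ← ENNReal.ofReal_mul (exp_pos _).le, ← exp_add]
        simp
    _ ≤ ENNReal.ofReal (exp (-(C₁ / 2) * n)) * ∫⁻ ω, f ω ∂μ := by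
        gcongr
        exact (mul_le_mul_right (measure_mono h_sub) _).trans (mul_meas_ge_le_lintegral hf _)
    _ ≤ ENNReal.ofReal (exp (-(C₁ / 2) * n)) * ENNReal.ofReal (tailMgfBound C₀ C₁) ^ m :=
        mul_le_mul_right (lintegral_exp_sum_range_le h hX hC₀ hC₁ m) _

end PartialSums

lemma measure_lt_sum_range_random_le {Ω : Type*} [MeasurableSpace Ω] (μ : Measure Ω)
    (X : ℕ → Ω → ℕ) (Y : Ω → ℕ) (m n : ℕ) :
    μ {ω | n < ∑ i ∈ Finset.range (Y ω), X i ω}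
      ≤ μ {ω | m < Y ω} + μ {ω | n < ∑ i ∈ Finset.range m, X i ω} := by
  refine (measure_mono fun ω (hω : n < _) => ?_).trans (measure_union_le _ _)
  rcases lt_or_ge m (Y ω) with hY | hY
  · exact Or.inl hY
  · exact Or.inr (hω.trans_le (Finset.sum_le_sum_of_subset (Finset.range_subset_range.2 hY)))

lemma exists_exp_bound_of_tradeoff {a b c K : ℝ} (ha : 0 ≤ a) (hb : 0 < b) (hc : 0 < c)
    (hK : 1 < K) :
    ∃ C₀' C₁' : ℝ, 0 < C₀' ∧ 0 < C₁' ∧ ∀ n : ℕ, ∃ m : ℕ,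
      a * exp (-b * m) + exp (-c * n) * K ^ m ≤ C₀' * exp (-C₁' * n) := by
  have hK₀ : 0 < K := zero_lt_one.trans hK
  have h_log : 0 < log K := log_pos hK
  -- with `m ≈ α n`, the factor `K ^ m` eats up only half of the decay `exp (-c n)`
  set α := c / (2 * log K)
  have hα : 0 < α := by positivity
  have hα_log : α * log K = c / 2 := by simp only [α]; field_simp
  set d := min (b * α) (c / 2)
  refine ⟨a + K, d, by linarith, by positivity, fun n => ⟨⌈α * n⌉₊, ?_⟩⟩
  set m := ⌈α * n⌉₊
  have hm_ge : α * n ≤ m := Nat.le_ceil _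
  have hm_le : (m : ℝ) ≤ α * n + 1 := (Nat.ceil_lt_add_one (by positivity)).le
  have hn : (0 : ℝ) ≤ n := n.cast_nonneg
  have h_first : exp (-b * m) ≤ exp (-d * n) :=
    exp_le_exp.2 (by nlinarith [min_le_left (b * α) (c / 2)])
  have h_second : exp (-c * n) * K ^ m ≤ K * exp (-d * n) :=
    calc exp (-c * n) * K ^ m = exp (-c * n + m * log K) := by
          rw [exp_add, exp_nat_mul, exp_log hK₀]
      _ ≤ exp (log K + -d * n) :=
          exp_le_exp.2 (by nlinarith [min_le_right (b * α) (c / 2)])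
      _ = K * exp (-d * n) := by rw [exp_add, exp_log hK₀]
  calc a * exp (-b * m) + exp (-c * n) * K ^ m ≤ a * exp (-d * n) + K * exp (-d * n) :=
        add_le_add (mul_le_mul_of_nonneg_left h_first ha) h_second
    _ = (a + K) * exp (-d * n) := by ring

theorem random_sum_exponential_tail_general (Ω : Type) [MeasurableSpace Ω] (μ : Measure Ω)
    [IsProbabilityMeasure μ] (X : ℕ → Ω → ℕ) (hXmeas : ∀ i, Measurable (X i))
    (Y : Ω → ℕ)
    (C₀ C₁ : ℝ) (hC₀ : 0 < C₀) (hC₁ : 0 < C₁)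
    (hXtail : ∀ (i : ℕ) (v : ℕ → ℕ) (n : ℕ),
      0 < μ {ω | ∀ j < i, X j ω = v j} →
      (μ[|{ω | ∀ j < i, X j ω = v j}]) {ω | n < X i ω}
        ≤ ENNReal.ofReal (C₀ * Real.exp (-C₁ * n)))
    (hYtail : ∀ n : ℕ, μ {ω | n < Y ω} ≤ ENNReal.ofReal (C₀ * Real.exp (-C₁ * n))) :
    ∃ C₀' C₁' : ℝ, 0 < C₀' ∧ 0 < C₁' ∧
      ∀ n : ℕ,
        μ {ω | n < ∑ i ∈ Finset.range (Y ω), X i ω}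
          ≤ ENNReal.ofReal (C₀' * Real.exp (-C₁' * n)) := by
  have hK := one_lt_tailMgfBound hC₀ hC₁
  obtain ⟨C₀', C₁', hC₀', hC₁', h_tradeoff⟩ :=
    exists_exp_bound_of_tradeoff hC₀.le hC₁ (half_pos hC₁) hK
  refine ⟨C₀', C₁', hC₀', hC₁', fun n => ?_⟩
  obtain ⟨m, hm⟩ := h_tradeoff n
  calc μ {ω | n < ∑ i ∈ Finset.range (Y ω), X i ω}
      ≤ μ {ω | m < Y ω} + μ {ω | n < ∑ i ∈ Finset.range m, X i ω} :=
        measure_lt_sum_range_random_le μ X Y m n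
    _ ≤ ENNReal.ofReal (C₀ * exp (-C₁ * m))
          + ENNReal.ofReal (exp (-(C₁ / 2) * n)) * ENNReal.ofReal (tailMgfBound C₀ C₁) ^ m :=
        add_le_add (hYtail m) (measure_lt_sum_range_le hXtail hXmeas hC₀.le hC₁ m n)
    _ = ENNReal.ofReal (C₀ * exp (-C₁ * m) + exp (-(C₁ / 2) * n) * tailMgfBound C₀ C₁ ^ m) := by
        rw [ENNReal.ofReal_add (by positivity) (by positivity),
          ENNReal.ofReal_mul (exp_pos _).le, ENNReal.ofReal_pow (by linarith)]
    _ ≤ ENNReal.ofReal (C₀' * exp (-C₁' * n)) := ENNReal.ofReal_le_ofReal hm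

/-- A random geometric sum of nonnegative-integer random variables with strong
uniform exponential tail decay, with an exponentially decaying number of terms, has an
exponentially decaying tail. -/
theorem random_sum_exponential_tail (Ω : Type) [MeasurableSpace Ω] (μ : Measure Ω)
    [IsProbabilityMeasure μ] (X : ℕ → Ω → ℕ) (hXmeas : ∀ i, Measurable (X i))
    (Y : Ω → ℕ) (hYmeas : Measurable Y) (hY1 : ∀ ω, 1 ≤ Y ω)
    (C₀ C₁ : ℝ) (hC₀ : 0 < C₀) (hC₁ : 0 < C₁)
    (hXtail : ∀ (i : ℕ) (v : ℕ → ℕ) (n : ℕ),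
      0 < μ {ω | ∀ j < i, X j ω = v j} →
      (μ[|{ω | ∀ j < i, X j ω = v j}]) {ω | n < X i ω}
        ≤ ENNReal.ofReal (C₀ * Real.exp (-C₁ * n)))
    (hYtail : ∀ n : ℕ, μ {ω | n < Y ω} ≤ ENNReal.ofReal (C₀ * Real.exp (-C₁ * n))) :
    ∃ C₀' C₁' : ℝ, 0 < C₀' ∧ 0 < C₁' ∧
      ∀ n : ℕ,
        μ {ω | n < ∑ i ∈ Finset.range (Y ω), X i ω}
          ≤ ENNReal.ofReal (C₀' * Real.exp (-C₁' * n)) :=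
  random_sum_exponential_tail_general Ω μ X hXmeas Y C₀ C₁ hC₀ hC₁ hXtail hYtail
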